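/- There exists a constant M₃ > 0 such that for every integer n ≥ 2 and every polynomial p ∈ P_n with p(1) = p(−1) = 0, the polynomial p is divisible by 1−u², the quotient p/(1−u²) lies in P_{n−2}, and ‖p/(1−u²)‖_{n−2} ≤ M₃·‖p‖_n. -/

import Mathlib

/-!
Since `τ_k` has degree `k`, the `τ_k` form a basis of `ℂ[X]`, and `‖·‖_n` is a weighted
`ℓ¹` norm of the coordinates in this basis.

Fix `ε = ±1`. Every `τ_k - τ_k(ε)` is divisible by `1 - εu`; call the quotient `ρ_k`. For
`k ≥ 2` it satisfies `k ρ_{k+1} = D ρ_k - 2ε ρ_k + ε τ_k`, because `u ρ_k = ε (ρ_k - τ_k)`.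
Solving this recursion in coordinates, the coefficient of `τ_j` in `ρ_k` is, up to a factor
`-1/2`, the Taylor coefficient `(-2ε)^m / m!` of `exp (-2εt)` with `m = k - j` (with a
shift at `j = 0`). Hence `‖ρ_k‖_{k-1} ≤ ∑ π^i / i! ≤ e^π`, and if `p = ∑ a_k τ_k` vanishes
at `ε` then `p / (1 - εu) = ∑ a_k ρ_k` has `‖·‖_{n-1}` at most `e^π ‖p‖_n`. Dividing first
by `1 - u` and then by `1 + u` gives the theorem with `M₃ = e^{2π}`.
-/

open Polynomial Classical

/-- The operator `D` on polynomials: `(Dp)(u) = (1 - u²)·p′(u)`. -/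
noncomputable def Dop (p : Polynomial ℂ) : Polynomial ℂ := (1 - X ^ 2) * derivative p

/-- The polynomials τ_n: τ₀ = 1, τ₁ = X, τ_{n+1} = (1/n)·D τ_n for n ≥ 1. -/
noncomputable def tau : ℕ → Polynomial ℂ
  | 0 => 1
  | 1 => X
  | n + 2 => (((n + 1 : ℕ) : ℂ))⁻¹ • Dop (tau (n + 1))

/-- The norm `‖p‖_n` of a polynomial `p ∈ P_n`: writing `p = Σ_{k=0}^n a_k τ_k`
(the `τ_k` form a basis of `P_n`, so the `a_k` are unique), set
`‖p‖_n = Σ_{k=0}^n |a_k|·(π/2)^{n-k}`. -/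
noncomputable def tauNorm (n : ℕ) (p : Polynomial ℂ) : ℝ :=
  if h : ∃ a : ℕ → ℂ, p = ∑ k ∈ Finset.range (n + 1), a k • tau k then
    ∑ k ∈ Finset.range (n + 1), ‖h.choose k‖ * (Real.pi / 2) ^ (n - k)
  else 0

open scoped Nat
open Finset

lemma Dop_tau (k : ℕ) : Dop (tau k) = (k : ℂ) • tau (k + 1) := by
  rcases k with _ | k
  · simp [tau, Dop]
  · rw [show tau (k + 2) = ((k + 1 : ℕ) : ℂ)⁻¹ • Dop (tau (k + 1)) from rfl, smul_smul,
      mul_inv_cancel₀ (Nat.cast_ne_zero.2 k.succ_ne_zero), one_smul]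

lemma degree_tau (k : ℕ) : (tau k).degree = k := by
  induction k with
  | zero => simp [tau]
  | succ k ih =>
    rcases k with _ | k
    · simp [tau]
    have hD : tau (k + 2) = C ((k + 1 : ℕ) : ℂ)⁻¹ * ((1 - X ^ 2) * derivative (tau (k + 1))) := by
      rw [← smul_eq_C_mul]; rfl
    have h2 : (1 - X ^ 2 : ℂ[X]).degree = 2 := by
      rw [sub_eq_neg_add, degree_add_eq_left_of_degree_lt] <;> simp
    have hd : (derivative (tau (k + 1))).degree = k := by
      rw [degree_derivative, natDegree_eq_of_degree_eq_some ih] <;>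
        simp [natDegree_eq_of_degree_eq_some ih]
    rw [hD, degree_mul, degree_mul, degree_C (inv_ne_zero (Nat.cast_ne_zero.2 k.succ_ne_zero)),
      h2, hd]
    norm_cast
    omega


noncomputable def tauSeq : Polynomial.Sequence ℂ := ⟨tau, degree_tau⟩

lemma isUnit_leadingCoeff_tauSeq (k : ℕ) : IsUnit (tauSeq k).leadingCoeff :=
  (leadingCoeff_ne_zero.2 (tauSeq.ne_zero k)).isUnit

noncomputable def tauBasis : Module.Basis ℕ ℂ ℂ[X] := tauSeq.basis isUnit_leadingCoeff_tauSeq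

@[simp] lemma tauBasis_apply (k : ℕ) : tauBasis k = tau k := Sequence.basis_eq_self _ _ _

@[simp] lemma tauBasis_repr_tau (k : ℕ) : tauBasis.repr (tau k) = Finsupp.single k 1 := by
  rw [← tauBasis_apply, Module.Basis.repr_self]

lemma tauBasis_repr_sum (s : Finset ℕ) (a : ℕ → ℂ) (k : ℕ) :
    tauBasis.repr (∑ j ∈ s, a j • tau j) k = if k ∈ s then a k else 0 := by
  simp [Finsupp.single_apply]

lemma tauBasis_repr_support_subset {n : ℕ} {p : ℂ[X]} (hp : p.degree ≤ n) :
    ↑(tauBasis.repr p).support ⊆ Set.Iic n := by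
  refine tauBasis.mem_span_image.1 ?_
  rw [show (tauBasis : ℕ → ℂ[X]) = tauSeq from funext tauBasis_apply,
    tauSeq.span_degreeLE fun k _ => isUnit_leadingCoeff_tauSeq k]
  exact mem_degreeLE.2 hp

lemma tauBasis_repr_eq_zero {n k : ℕ} {p : ℂ[X]} (hp : p.degree ≤ n) (hk : n < k) :
    tauBasis.repr p k = 0 := by
  by_contra h
  exact absurd (tauBasis_repr_support_subset hp (Finsupp.mem_support_iff.2 h)) (by simpa using hk)

lemma sum_tauBasis_repr {n : ℕ} {p : ℂ[X]} (hp : p.degree ≤ n) :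
    ∑ k ∈ range (n + 1), tauBasis.repr p k • tau k = p := by
  conv_rhs => rw [← tauBasis.linearCombination_repr p]
  rw [Finsupp.linearCombination_apply, Finsupp.sum_of_support_subset _ (s := range (n + 1))]
  · simp
  · intro k hk
    simpa [Nat.lt_succ_iff] using tauBasis_repr_support_subset hp hk
  · simp

lemma tauNorm_eq_sum {n : ℕ} {p : ℂ[X]} (hp : p.degree ≤ n) :
    tauNorm n p = ∑ k ∈ range (n + 1), ‖tauBasis.repr p k‖ * (Real.pi / 2) ^ (n - k) := by
  have hex : ∃ a : ℕ → ℂ, p = ∑ k ∈ range (n + 1), a k • tau k :=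
    ⟨_, (sum_tauBasis_repr hp).symm⟩
  rw [tauNorm, dif_pos hex]
  refine sum_congr rfl fun k hk => ?_
  have hcoord := congrArg (fun q => tauBasis.repr q k) hex.choose_spec
  simp only [tauBasis_repr_sum, if_pos hk] at hcoord
  rw [hcoord]

lemma degree_sum_smul_le {R ι : Type*} [Semiring R] {n : WithBot ℕ} (s : Finset ι) (c : ι → R)
    (f : ι → R[X]) (hf : ∀ i ∈ s, (f i).degree ≤ n) : (∑ i ∈ s, c i • f i).degree ≤ n :=
  mem_degreeLE.1 <| Submodule.sum_mem _ fun i hi =>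
    Submodule.smul_mem _ _ (mem_degreeLE.2 (hf i hi))

lemma tauNorm_sum_smul_le {ι : Type*} {n : ℕ} (s : Finset ι) (c : ι → ℂ) (f : ι → ℂ[X])
    (hf : ∀ i ∈ s, (f i).degree ≤ n) :
    tauNorm n (∑ i ∈ s, c i • f i) ≤ ∑ i ∈ s, ‖c i‖ * tauNorm n (f i) := by
  rw [tauNorm_eq_sum (degree_sum_smul_le s c f hf)]
  calc ∑ k ∈ range (n + 1), ‖tauBasis.repr (∑ i ∈ s, c i • f i) k‖ * (Real.pi / 2) ^ (n - k)
      ≤ ∑ k ∈ range (n + 1),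
          (∑ i ∈ s, ‖c i‖ * ‖tauBasis.repr (f i) k‖) * (Real.pi / 2) ^ (n - k) := by
        gcongr with k
        simp only [map_sum, map_smul, Finsupp.coe_finsetSum, Finset.sum_apply,
          Finsupp.smul_apply, smul_eq_mul, ← norm_mul]
        exact norm_sum_le _ _
    _ = ∑ i ∈ s, ‖c i‖ * tauNorm n (f i) := by
        simp only [sum_mul, mul_assoc]
        rw [sum_comm]
        refine sum_congr rfl fun i hi => ?_
        rw [tauNorm_eq_sum (hf i hi), mul_sum]

lemma tauNorm_of_degree_le {m n : ℕ} {p : ℂ[X]} (hp : p.degree ≤ m) (hmn : m ≤ n) :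
    tauNorm n p = (Real.pi / 2) ^ (n - m) * tauNorm m p := by
  rw [tauNorm_eq_sum (hp.trans (by exact_mod_cast hmn)), tauNorm_eq_sum hp, mul_sum]
  rw [← sum_subset (range_subset_range.2 (Nat.succ_le_succ hmn))]
  · refine sum_congr rfl fun k hk => ?_
    rw [mul_left_comm, ← pow_add, show n - m + (m - k) = n - k by grind]
  · intro k _ hk
    rw [tauBasis_repr_eq_zero hp (by simpa using hk), norm_zero, zero_mul]

noncomputable def dopLinearMap : ℂ[X] →ₗ[ℂ] ℂ[X] := LinearMap.mulLeft ℂ (1 - X ^ 2) ∘ₗ derivative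

lemma dopLinearMap_apply (p : ℂ[X]) : dopLinearMap p = Dop p := rfl

lemma tauBasis_repr_Dop_zero (p : ℂ[X]) : tauBasis.repr (Dop p) 0 = 0 := by
  suffices (tauBasis.coord 0).comp dopLinearMap = 0 from LinearMap.congr_fun this p
  refine tauBasis.ext fun k => ?_
  simp [dopLinearMap_apply, Dop_tau]

lemma tauBasis_repr_Dop_succ (p : ℂ[X]) (t : ℕ) :
    tauBasis.repr (Dop p) (t + 1) = t * tauBasis.repr p t := by
  suffices (tauBasis.coord (t + 1)).comp dopLinearMap = (t : ℂ) • tauBasis.coord t from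
    LinearMap.congr_fun this p
  refine tauBasis.ext fun k => ?_
  by_cases h : k = t <;> simp [dopLinearMap_apply, Dop_tau, h]

noncomputable def expCoeff (c : ℂ) (m : ℕ) : ℂ := c ^ m / m !

lemma succ_mul_expCoeff_succ (c : ℂ) (m : ℕ) :
    ((m + 1 : ℕ) : ℂ) * expCoeff c (m + 1) = c * expCoeff c m := by
  rw [expCoeff, expCoeff, Nat.factorial_succ, Nat.cast_mul]
  field_simp
  ring

/- For `ε ^ 2 = 1`, `tauQuot ε k = (τ_k - τ_k(ε)) / (1 - εX)`, and for `k ≥ 2` its `τ_j`-coordinate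
is `quotCoeff ε k j`. The formula solves `tauQuot_recursion` coordinatewise: along a diagonal
`k - j = m` with `j ≥ 1` the recursion reads `(m + 1) c_{m+1} = -2ε c_m`, while the column `j = 0`
receives nothing from `D`, which shifts its index by one. -/
noncomputable def quotCoeff (ε : ℂ) (k j : ℕ) : ℂ :=
  if k ≤ j then 0
  else if j = 0 then -ε / 2 * expCoeff (-2 * ε) (k - 1)
  else -1 / 2 * expCoeff (-2 * ε) (k - j)

section quotCoeff

variable {ε : ℂ} {k j : ℕ}

lemma quotCoeff_of_le (h : k ≤ j) : quotCoeff ε k j = 0 := if_pos h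

lemma quotCoeff_zero (hk : 0 < k) : quotCoeff ε k 0 = -ε / 2 * expCoeff (-2 * ε) (k - 1) := by
  rw [quotCoeff, if_neg (by omega), if_pos rfl]

lemma quotCoeff_of_pos (hj : 0 < j) (hjk : j < k) :
    quotCoeff ε k j = -1 / 2 * expCoeff (-2 * ε) (k - j) := by
  rw [quotCoeff, if_neg (by omega), if_neg (by omega)]

end quotCoeff

noncomputable def tauQuot (ε : ℂ) : ℕ → ℂ[X]
  | 0 => 0
  | 1 => C (-ε)
  | k + 2 => ∑ j ∈ range (k + 2), quotCoeff ε (k + 2) j • tau j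

lemma tauBasis_repr_tauQuot (ε : ℂ) {k : ℕ} (hk : 2 ≤ k) (t : ℕ) :
    tauBasis.repr (tauQuot ε k) t = quotCoeff ε k t := by
  obtain ⟨k, rfl⟩ : ∃ j, k = j + 2 := ⟨k - 2, by omega⟩
  rw [tauQuot, tauBasis_repr_sum]
  split_ifs with ht
  · rfl
  · rw [quotCoeff_of_le (by simpa using ht)]

lemma quotCoeff_recursion_zero (ε : ℂ) (k : ℕ) :
    ((k + 2 : ℕ) : ℂ) * quotCoeff ε (k + 3) 0 = -2 * ε * quotCoeff ε (k + 2) 0 := by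
  rw [quotCoeff_zero (by omega), quotCoeff_zero (by omega), show k + 3 - 1 = k + 1 + 1 by omega,
    show k + 2 - 1 = k + 1 by omega]
  linear_combination (-ε / 2) * succ_mul_expCoeff_succ (-2 * ε) (k + 1)

lemma quotCoeff_recursion_succ (ε : ℂ) (k t : ℕ) :
    ((k + 2 : ℕ) : ℂ) * quotCoeff ε (k + 3) (t + 1) =
      t * quotCoeff ε (k + 2) t - 2 * ε * quotCoeff ε (k + 2) (t + 1) +
        if t = k + 1 then ε else 0 := by
  rcases lt_trichotomy (t + 1) (k + 2) with ht | ht | ht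
  · obtain ⟨m, rfl⟩ : ∃ m, k = t + m := ⟨k - t, by omega⟩
    have hrec := succ_mul_expCoeff_succ (-2 * ε) (m + 1)
    rw [if_neg (by omega), quotCoeff_of_pos (k := t + m + 3) (by omega) (by omega),
      quotCoeff_of_pos (k := t + m + 2) (j := t + 1) (by omega) (by omega),
      show t + m + 3 - (t + 1) = m + 2 by omega, show t + m + 2 - (t + 1) = m + 1 by omega]
    rcases t with _ | t
    · rw [quotCoeff_zero (by omega), show 0 + m + 2 - 1 = m + 1 by omega]
      push_cast at hrec ⊢
      linear_combination (-1 / 2) * hrec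
    · rw [quotCoeff_of_pos (by omega) (by omega), show t + 1 + m + 2 - (t + 1) = m + 2 by omega]
      push_cast at hrec ⊢
      linear_combination (-1 / 2) * hrec
  · obtain rfl : t = k + 1 := by omega
    rw [if_pos rfl, quotCoeff_of_pos (by omega) (by omega), quotCoeff_of_pos (by omega) (by omega),
      quotCoeff_of_le le_rfl, show k + 3 - (k + 2) = 1 by omega, show k + 2 - (k + 1) = 1 by omega]
    simp only [expCoeff, pow_one, Nat.factorial_one, Nat.cast_one, div_one]
    push_cast
    ring
  · rw [quotCoeff_of_le (by omega), quotCoeff_of_le (by omega), quotCoeff_of_le (by omega),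
      if_neg (by omega)]
    ring

lemma tauQuot_recursion (ε : ℂ) (k : ℕ) :
    ((k + 2 : ℕ) : ℂ) • tauQuot ε (k + 3) =
      Dop (tauQuot ε (k + 2)) - (2 * ε) • tauQuot ε (k + 2) + ε • tau (k + 2) := by
  refine tauBasis.ext_elem fun t => ?_
  rcases t with _ | t
  · simpa [tauBasis_repr_Dop_zero, tauBasis_repr_tauQuot] using quotCoeff_recursion_zero ε k
  · simpa [tauBasis_repr_Dop_succ, tauBasis_repr_tauQuot, Finsupp.single_apply, eq_comm]
      using quotCoeff_recursion_succ ε k t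

lemma tau_eq_mul_tauQuot {ε : ℂ} (hε : ε ^ 2 = 1) (k : ℕ) :
    tau (k + 2) = (1 - C ε * X) * tauQuot ε (k + 2) := by
  have hC : C ε ^ 2 = 1 := by rw [← C_pow, hε, C_1]
  induction k with
  | zero =>
    have h2 : tau 2 = 1 - X ^ 2 := by simp [tau, Dop]
    have hq : tauQuot ε 2 = C ε ^ 2 + C ε * X := by
      have h0 : quotCoeff ε 2 0 = ε ^ 2 := by simp [quotCoeff_zero, expCoeff]; ring
      have h1 : quotCoeff ε 2 1 = ε := by simp [quotCoeff_of_pos, expCoeff]; ring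
      simp [tauQuot, sum_range_succ, h0, h1, tau, smul_eq_C_mul]
    rw [h2, hq]
    linear_combination (X ^ 2 + C ε * X - 1) * hC
  | succ k ih =>
    set ρ := tauQuot ε (k + 2)
    have hk : ((k + 2 : ℕ) : ℂ) ≠ 0 := Nat.cast_ne_zero.2 (by omega)
    -- `D ((1 - εX) ρ) = (1 - εX) D ρ - ε (1 - X²) ρ` and `1 - X² = (1 - εX) (1 + εX)`
    apply smul_right_injective ℂ[X] hk
    simp only
    rw [← Dop_tau, ← mul_smul_comm, show k + 1 + 2 = k + 3 from rfl, tauQuot_recursion, ih]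
    simp only [Dop, smul_eq_C_mul, derivative_mul, derivative_sub, derivative_one,
      derivative_C, derivative_X, C_mul, C_ofNat, zero_sub]
    linear_combination (-(C ε * X ^ 2 * ρ)) * hC

lemma tau_sub_C_eval_eq_mul_tauQuot {ε : ℂ} (hε : ε ^ 2 = 1) (k : ℕ) :
    tau k - C ((tau k).eval ε) = (1 - C ε * X) * tauQuot ε k := by
  have hC : C ε ^ 2 = 1 := by rw [← C_pow, hε, C_1]
  match k with
  | 0 => simp [tau, tauQuot]
  | 1 =>
    simp only [tau, tauQuot, eval_X, C_neg]
    linear_combination (-X) * hC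
  | k + 2 =>
    rw [tau_eq_mul_tauQuot hε k]
    simp [← sq, hε]

lemma degree_tauQuot_le (ε : ℂ) (k : ℕ) : (tauQuot ε (k + 1)).degree ≤ k := by
  rcases k with _ | k
  · exact degree_C_le
  · refine degree_sum_smul_le _ _ _ fun j hj => ?_
    rw [degree_tau]
    exact_mod_cast Nat.lt_succ_iff.1 (mem_range.1 hj)

lemma norm_expCoeff (c : ℂ) (m : ℕ) : ‖expCoeff c m‖ = ‖c‖ ^ m / m ! := by
  simp [expCoeff]

lemma norm_quotCoeff_le {ε : ℂ} (hε : ‖ε‖ = 1) (k j : ℕ) :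
    ‖quotCoeff ε k j‖ ≤ 2 ^ (k - 1 - j) / (k - 1 - j)! := by
  have h2ε : ‖-2 * ε‖ = 2 := by simp [hε]
  rcases le_or_gt k j with hkj | hjk
  · rw [quotCoeff_of_le hkj, norm_zero]
    positivity
  rcases Nat.eq_zero_or_pos j with rfl | hj
  · rw [quotCoeff_zero (by omega), norm_mul, norm_expCoeff, h2ε, Nat.sub_zero]
    exact mul_le_of_le_one_left (by positivity) (by norm_num [hε])
  · set i := k - 1 - j
    rw [quotCoeff_of_pos hj hjk, norm_mul, norm_expCoeff, h2ε, show k - j = i + 1 by omega]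
    calc ‖(-1 / 2 : ℂ)‖ * (2 ^ (i + 1) / (i + 1)!) = (2 ^ i / i ! : ℝ) / (i + 1 : ℕ) := by
          rw [Nat.factorial_succ, Nat.cast_mul]
          norm_num
          field_simp
          ring
      _ ≤ 2 ^ i / i ! := div_le_self (by positivity) (by exact_mod_cast i.succ_pos)

lemma tauNorm_tauQuot_le {ε : ℂ} (hε : ‖ε‖ = 1) (k : ℕ) :
    tauNorm k (tauQuot ε (k + 1)) ≤ Real.exp Real.pi := by
  rw [tauNorm_eq_sum (degree_tauQuot_le ε k)]
  rcases k with _ | k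
  · rw [tauQuot, show C (-ε) = -ε • tau 0 by simp [tau, smul_eq_C_mul]]
    simpa [hε] using Real.one_le_exp Real.pi_pos.le
  calc ∑ j ∈ range (k + 2), ‖tauBasis.repr (tauQuot ε (k + 2)) j‖ * (Real.pi / 2) ^ (k + 1 - j)
      ≤ ∑ j ∈ range (k + 2), Real.pi ^ (k + 1 - j) / (k + 1 - j)! := by
        gcongr with j
        rw [tauBasis_repr_tauQuot ε (by omega)]
        calc _ ≤ 2 ^ (k + 1 - j) / (k + 1 - j)! * (Real.pi / 2) ^ (k + 1 - j) := by
              gcongr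
              exact norm_quotCoeff_le hε _ _
          _ = _ := by rw [div_mul_eq_mul_div, ← mul_pow]; ring_nf
    _ = ∑ i ∈ range (k + 2), Real.pi ^ i / i ! :=
        sum_range_reflect (fun i => Real.pi ^ i / i !) (k + 2)
    _ ≤ Real.exp Real.pi := Real.sum_le_exp_of_nonneg Real.pi_pos.le _

lemma degree_tauQuot_le_of_le (ε : ℂ) {k n : ℕ} (hk : k ≤ n + 1) : (tauQuot ε k).degree ≤ n := by
  rcases k with _ | k
  · simp [tauQuot]
  · exact (degree_tauQuot_le ε k).trans (by exact_mod_cast Nat.le_of_succ_le_succ hk)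

lemma tauNorm_tauQuot_le_of_le {ε : ℂ} (hε : ‖ε‖ = 1) {k n : ℕ} (hk : k ≤ n + 1) :
    tauNorm n (tauQuot ε k) ≤ Real.exp Real.pi * (Real.pi / 2) ^ (n + 1 - k) := by
  rcases k with _ | k
  · rw [tauNorm_eq_sum (degree_tauQuot_le_of_le ε hk)]
    simp only [tauQuot, map_zero, Finsupp.coe_zero, Pi.zero_apply, norm_zero, zero_mul,
      sum_const_zero]
    positivity
  · rw [tauNorm_of_degree_le (degree_tauQuot_le ε k) (by omega),
      show n + 1 - (k + 1) = n - k by omega, mul_comm]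
    gcongr
    exact tauNorm_tauQuot_le hε k

theorem exists_eq_mul_tauNorm_le {ε : ℂ} (hε : ε ^ 2 = 1) {n : ℕ} {p : ℂ[X]}
    (hp : p.degree ≤ (n + 1 : ℕ)) (hpε : p.eval ε = 0) :
    ∃ q, p = (1 - C ε * X) * q ∧ q.degree ≤ (n : WithBot ℕ) ∧
      tauNorm n q ≤ Real.exp Real.pi * tauNorm (n + 1) p := by
  have hε' : ‖ε‖ = 1 := by
    rw [← pow_left_inj₀ (norm_nonneg ε) zero_le_one two_ne_zero, ← norm_pow, hε, norm_one, one_pow]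
  set a := tauBasis.repr p
  have hdeg : ∀ k ∈ range (n + 2), (tauQuot ε k).degree ≤ n := fun k hk =>
    degree_tauQuot_le_of_le ε (by simpa [Nat.lt_succ_iff] using hk)
  refine ⟨∑ k ∈ range (n + 2), a k • tauQuot ε k, ?_, degree_sum_smul_le _ _ _ hdeg, ?_⟩
  · calc p = p - C (p.eval ε) := by rw [hpε, C_0, sub_zero]
      _ = ∑ k ∈ range (n + 2), a k • (tau k - C ((tau k).eval ε)) := by
          conv_lhs => rw [← sum_tauBasis_repr hp]
          simp [eval_finsetSum, smul_sub, sum_sub_distrib, smul_eq_C_mul]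
          rfl
      _ = _ := by simp_rw [tau_sub_C_eval_eq_mul_tauQuot hε, mul_sum, mul_smul_comm]
  · calc tauNorm n (∑ k ∈ range (n + 2), a k • tauQuot ε k)
        ≤ ∑ k ∈ range (n + 2), ‖a k‖ * tauNorm n (tauQuot ε k) :=
          tauNorm_sum_smul_le _ _ _ hdeg
      _ ≤ ∑ k ∈ range (n + 2), ‖a k‖ * (Real.exp Real.pi * (Real.pi / 2) ^ (n + 1 - k)) := by
          gcongr with k hk
          exact tauNorm_tauQuot_le_of_le hε' (by simpa [Nat.lt_succ_iff] using hk)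
      _ = Real.exp Real.pi * tauNorm (n + 1) p := by
          rw [tauNorm_eq_sum hp, mul_sum]
          exact sum_congr rfl fun k _ => by ring

theorem stmt_4 :
    ∃ M₃ > (0 : ℝ), ∀ n : ℕ, 2 ≤ n → ∀ p : Polynomial ℂ, p.degree ≤ (n : WithBot ℕ) →
      p.eval 1 = 0 → p.eval (-1) = 0 →
      ∃ q : Polynomial ℂ, p = (1 - X ^ 2) * q ∧ q.degree ≤ ((n - 2 : ℕ) : WithBot ℕ) ∧
        tauNorm (n - 2) q ≤ M₃ * tauNorm n p := by
  refine ⟨Real.exp Real.pi ^ 2, by positivity, fun n hn p hp hp1 hpm1 => ?_⟩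
  obtain ⟨n, rfl⟩ : ∃ m, n = m + 2 := ⟨n - 2, by omega⟩
  obtain ⟨r, rfl, hr, hrp⟩ := exists_eq_mul_tauNorm_le (ε := 1) (by norm_num) hp hp1
  have hrm1 : r.eval (-1) = 0 := by simpa using hpm1
  obtain ⟨q, rfl, hq, hqr⟩ := exists_eq_mul_tauNorm_le (ε := -1) (by norm_num) hr hrm1
  refine ⟨q, by simp; ring, by simpa using hq, ?_⟩
  calc tauNorm (n + 2 - 2) q = tauNorm n q := rfl
    _ ≤ Real.exp Real.pi * (Real.exp Real.pi * tauNorm (n + 2) _) := hqr.trans (by gcongr)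
    _ = _ := by ring
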